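/- Let −1 < ν < μ and let f be twice continuously differentiable on [0,∞) with lim_{y→0+} y^ν·f'(y) = 0. Define the first descent operator (T f)(x) = (2Γ((μ+1)/2)/(Γ((μ−ν)/2)·Γ((ν+1)/2)))·x^{1−μ}·∫₀^x f(y)·(x²−y²)^{(μ−ν)/2−1}·y^ν dy for x > 0. Then T intertwines the Bessel operators: (T(B_ν f))(x) = (B_μ(T f))(x) for all x > 0, and T applied to the constant function 1 equals 1, i.e. (2Γ((μ+1)/2)/(Γ((μ−ν)/2)·Γ((ν+1)/2)))·x^{1−μ}·∫₀^x (x²−y²)^{(μ−ν)/2−1}·y^ν dy = 1 for every x > 0. -/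

import Mathlib

/-!
Substituting `y = t x` turns `T f (x)` into `c ∫₀¹ f (t x) w(t) dt` with
`w(t) = (1 - t²)^((μ-ν)/2-1) t^ν`, so derivatives in `x` pass under the integral as integrals of
`t f' (t x)` and `t² f'' (t x)` against `w`. The integrand of `T (B_ν f) - B_μ (T f)` is then the
`t`-derivative of `f' (t x) (1 - t²)^((μ-ν)/2) t^ν / x`, which vanishes at `t = 1` because
`ν < μ` and at `t = 0` because `y^ν f'(y) → 0`. Finally `T 1 = 1` is the Beta integral
`∫₀¹ w = B((ν+1)/2, (μ-ν)/2) / 2`.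
-/

open MeasureTheory Real Filter

noncomputable def besselOp (ν : ℝ) (u : ℝ → ℝ) (y : ℝ) : ℝ :=
  deriv (deriv u) y + (ν / y) * deriv u y

noncomputable def descentOp1 (ν μ : ℝ) (f : ℝ → ℝ) (x : ℝ) : ℝ :=
  2 * Real.Gamma ((μ + 1) / 2) / (Real.Gamma ((μ - ν) / 2) * Real.Gamma ((ν + 1) / 2)) *
    x ^ (1 - μ) * ∫ y in (0 : ℝ)..x, f y * (x ^ 2 - y ^ 2) ^ ((μ - ν) / 2 - 1) * y ^ ν

open Set Topology
open scoped Interval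

noncomputable def descentWeight (p σ t : ℝ) : ℝ := (1 - t ^ 2) ^ p * t ^ σ

lemma intervalIntegrable_descentWeight {p σ : ℝ} (hp : -1 < p) (hσ : -1 < σ) :
    IntervalIntegrable (descentWeight p σ) volume 0 1 := by
  have hleft : IntervalIntegrable (descentWeight p σ) volume 0 (1 / 2) := by
    have hc : ContinuousOn (fun t : ℝ => (1 - t ^ 2) ^ p) (uIcc 0 (1 / 2)) := by
      refine ContinuousOn.rpow_const (by fun_prop) fun t ht => Or.inl ?_
      rw [uIcc_of_le (by norm_num)] at ht
      nlinarith [ht.1, ht.2]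
    exact (intervalIntegral.intervalIntegrable_rpow' hσ).continuousOn_mul hc
  have hright : IntervalIntegrable (descentWeight p σ) volume (1 / 2) 1 := by
    have hsing : IntervalIntegrable (fun t : ℝ => (1 - t) ^ p) volume (1 / 2) 1 := by
      have h := ((intervalIntegral.intervalIntegrable_rpow' hp (a := 0) (b := 1 / 2)).comp_sub_left
        1).symm
      norm_num at h
      exact h
    have hc : ContinuousOn (fun t : ℝ => (1 + t) ^ p * t ^ σ) (uIcc (1 / 2) 1) := by
      rw [uIcc_of_le (by norm_num)]
      refine (ContinuousOn.rpow_const (by fun_prop) fun t ht => Or.inl ?_).mul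
        (ContinuousOn.rpow_const (by fun_prop) fun t ht => Or.inl ?_) <;> linarith [ht.1]
    refine (hsing.mul_continuousOn hc).congr_uIoo fun t ht => ?_
    rw [uIoo_of_le (by norm_num)] at ht
    rw [descentWeight, show 1 - t ^ 2 = (1 - t) * (1 + t) by ring,
      mul_rpow (by linarith [ht.2]) (by linarith [ht.1]), mul_assoc]
  exact hleft.trans hright

lemma descentWeight_eq_one_sub_sq_mul {p σ t : ℝ} (ht : t ^ 2 ≠ 1) :
    descentWeight p σ t = (1 - t ^ 2) * descentWeight (p - 1) σ t := by
  rw [descentWeight, descentWeight, rpow_sub_one (sub_ne_zero.2 ht.symm)]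
  field_simp

lemma hasDerivAt_descentWeight {p σ t : ℝ} (ht₀ : 0 < t) (ht₁ : t < 1) :
    HasDerivAt (descentWeight p σ)
      ((σ * (1 - t ^ 2) / t - 2 * p * t) * descentWeight (p - 1) σ t) t := by
  have hsq : (1 : ℝ) - t ^ 2 ≠ 0 := by nlinarith
  show HasDerivAt (fun t => (1 - t ^ 2) ^ p * t ^ σ) _ t
  have h := (((hasDerivAt_pow 2 t).const_sub 1).rpow_const (p := p) (Or.inl hsq)).mul
    (hasDerivAt_rpow_const (p := σ) (Or.inl ht₀.ne'))
  refine h.congr_deriv ?_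
  rw [descentWeight, rpow_sub_one hsq, rpow_sub_one ht₀.ne']
  field_simp
  ring

lemma continuousOn_comp_mul_right {φ : ℝ → ℝ} (hφ : ContinuousOn φ (Ici 0)) {x : ℝ}
    (hx : 0 ≤ x) :
    ContinuousOn (fun t => φ (t * x)) (uIcc 0 1) := by
  refine hφ.comp (continuous_mul_const x).continuousOn fun t ht => ?_
  rw [uIcc_of_le zero_le_one] at ht
  exact mul_nonneg ht.1 hx

lemma IntervalIntegrable.comp_mul_right_mul {w φ : ℝ → ℝ}
    (hw : IntervalIntegrable w volume 0 1) (hφ : ContinuousOn φ (Ici 0)) {x : ℝ}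
    (hx : 0 ≤ x) :
    IntervalIntegrable (fun t => φ (t * x) * w t) volume 0 1 :=
  hw.continuousOn_mul (continuousOn_comp_mul_right hφ hx)

lemma IntervalIntegrable.id_mul {w : ℝ → ℝ} (hw : IntervalIntegrable w volume 0 1) :
    IntervalIntegrable (fun t => t * w t) volume 0 1 :=
  hw.continuousOn_mul continuousOn_id

lemma hasDerivAt_integral_comp_mul_right_mul {w φ φ' : ℝ → ℝ}
    (hw : IntervalIntegrable w volume 0 1) (hφ : ContinuousOn φ (Ici 0))
    (hφ' : ContinuousOn φ' (Ici 0)) (hd : ∀ y, 0 < y → HasDerivAt φ (φ' y) y) {x : ℝ}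
    (hx : 0 < x) :
    HasDerivAt (fun x => ∫ t in (0 : ℝ)..1, φ (t * x) * w t)
      (∫ t in (0 : ℝ)..1, φ' (t * x) * (t * w t)) x := by
  obtain ⟨M, hM⟩ := isCompact_Icc.exists_bound_of_continuousOn
    (hφ'.mono (Icc_subset_Ici_self : Icc 0 (2 * x) ⊆ Ici 0))
  have hball : ∀ z ∈ Metric.ball x (x / 2), 0 < z ∧ z ≤ 2 * x := fun z hz => by
    rw [Metric.mem_ball, Real.dist_eq, abs_lt] at hz
    constructor <;> linarith
  refine (intervalIntegral.hasDerivAt_integral_of_dominated_loc_of_deriv_le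
    (F' := fun z t => φ' (t * z) * (t * w t)) (bound := fun t => M * ‖w t‖)
    (Metric.ball_mem_nhds x (half_pos hx)) ?_ (hw.comp_mul_right_mul hφ hx.le)
    (hw.id_mul.comp_mul_right_mul hφ' hx.le).def'.aestronglyMeasurable ?_
    (hw.norm.const_mul M) ?_).2
  · filter_upwards [Metric.ball_mem_nhds x (half_pos hx)] with z hz
    exact (hw.comp_mul_right_mul hφ (hball z hz).1.le).def'.aestronglyMeasurable
  · refine ae_of_all _ fun t ht z hz => ?_
    rw [uIoc_of_le zero_le_one] at ht
    obtain ⟨hz₀, hz₂⟩ := hball z hz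
    have hbound := hM (t * z) ⟨mul_nonneg ht.1.le hz₀.le, by nlinarith [ht.1, ht.2]⟩
    rw [norm_mul, norm_mul, Real.norm_of_nonneg ht.1.le]
    calc ‖φ' (t * z)‖ * (t * ‖w t‖) ≤ M * (1 * ‖w t‖) :=
          mul_le_mul hbound (mul_le_mul_of_nonneg_right ht.2 (norm_nonneg _))
            (mul_nonneg ht.1.le (norm_nonneg _)) ((norm_nonneg _).trans hbound)
      _ = M * ‖w t‖ := by ring
  · refine ae_of_all _ fun t ht z hz => ?_
    rw [uIoc_of_le zero_le_one] at ht
    have h := ((hd (t * z) (mul_pos ht.1 (hball z hz).1)).comp z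
      ((hasDerivAt_id z).const_mul t)).mul_const (w t)
    exact h.congr_deriv (by ring)

noncomputable def descentConst (ν μ : ℝ) : ℝ :=
  2 * Gamma ((μ + 1) / 2) / (Gamma ((μ - ν) / 2) * Gamma ((ν + 1) / 2))

lemma descentOp1_eq_integral_unitInterval (ν μ : ℝ) (f : ℝ → ℝ) {x : ℝ} (hx : 0 < x) :
    descentOp1 ν μ f x =
      descentConst ν μ *
        ∫ t in (0 : ℝ)..1, f (t * x) * descentWeight ((μ - ν) / 2 - 1) ν t := by
  set e := 2 * ((μ - ν) / 2 - 1) + ν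
  have hscale : EqOn
      (fun t => f (t * x) * (x ^ 2 - (t * x) ^ 2) ^ ((μ - ν) / 2 - 1) * (t * x) ^ ν)
      (fun t => x ^ e * (f (t * x) * descentWeight ((μ - ν) / 2 - 1) ν t)) (uIcc 0 1) := by
    intro t ht
    rw [uIcc_of_le zero_le_one] at ht
    have hx2 : (x ^ 2) ^ ((μ - ν) / 2 - 1) = x ^ (2 * ((μ - ν) / 2 - 1)) := by
      rw [← rpow_natCast, ← rpow_mul hx.le]; norm_num
    simp only [e, descentWeight]
    rw [show x ^ 2 - (t * x) ^ 2 = x ^ 2 * (1 - t ^ 2) by ring,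
      mul_rpow (sq_nonneg x) (by nlinarith [ht.1, ht.2]), mul_rpow ht.1 hx.le, hx2,
      rpow_add hx]
    ring
  have hpow : x ^ (1 - μ) * x * x ^ e = 1 := by
    rw [← rpow_add_one hx.ne', ← rpow_add hx]
    simp only [e]
    ring_nf
    exact rpow_zero x
  have hsub : ∫ y in (0 : ℝ)..x, f y * (x ^ 2 - y ^ 2) ^ ((μ - ν) / 2 - 1) * y ^ ν =
      x * ∫ t in (0 : ℝ)..1,
        f (t * x) * (x ^ 2 - (t * x) ^ 2) ^ ((μ - ν) / 2 - 1) * (t * x) ^ ν := by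
    rw [intervalIntegral.integral_comp_mul_right
      (fun y => f y * (x ^ 2 - y ^ 2) ^ ((μ - ν) / 2 - 1) * y ^ ν) hx.ne', zero_mul, one_mul,
      smul_eq_mul, mul_inv_cancel_left₀ hx.ne']
  rw [descentOp1, descentConst, mul_assoc, hsub, intervalIntegral.integral_congr hscale,
    intervalIntegral.integral_const_mul]
  congr 1
  linear_combination
    (∫ t in (0 : ℝ)..1, f (t * x) * descentWeight ((μ - ν) / 2 - 1) ν t) * hpow

lemma integral_rpow_mul_one_sub_rpow {a b : ℝ} (ha : 0 < a) (hb : 0 < b) :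
    ∫ s in (0 : ℝ)..1, s ^ (a - 1) * (1 - s) ^ (b - 1) = Gamma a * Gamma b / Gamma (a + b) := by
  have hbeta := Complex.Gamma_mul_Gamma_eq_betaIntegral (s := a) (t := b)
    (by simpa using ha) (by simpa using hb)
  have hreal : Complex.betaIntegral a b =
      ((∫ s in (0 : ℝ)..1, s ^ (a - 1) * (1 - s) ^ (b - 1) : ℝ) : ℂ) := by
    rw [Complex.betaIntegral, ← intervalIntegral.integral_ofReal]
    refine intervalIntegral.integral_congr fun s hs => ?_
    rw [uIcc_of_le zero_le_one] at hs
    rw [Complex.ofReal_mul, Complex.ofReal_cpow hs.1, Complex.ofReal_cpow (by linarith [hs.2])]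
    push_cast
    ring
  rw [hreal, ← Complex.ofReal_add, Complex.Gamma_ofReal, Complex.Gamma_ofReal,
    Complex.Gamma_ofReal] at hbeta
  rw [eq_div_iff (Gamma_pos_of_pos (add_pos ha hb)).ne', mul_comm]
  exact_mod_cast hbeta.symm

lemma integral_descentWeight {α σ : ℝ} (hα : 0 < α) (hσ : -1 < σ) :
    ∫ t in (0 : ℝ)..1, descentWeight (α - 1) σ t =
      Gamma ((σ + 1) / 2) * Gamma α / (2 * Gamma ((σ + 1) / 2 + α)) := by
  have hIoo : ∀ g : ℝ → ℝ,
      ∫ y in Ioi 0, (Ioo 0 1).indicator g y = ∫ y in (0 : ℝ)..1, g y := by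
    intro g
    rw [integral_indicator measurableSet_Ioo, Measure.restrict_restrict measurableSet_Ioo,
      inter_eq_self_of_subset_left Ioo_subset_Ioi_self,
      intervalIntegral.integral_of_le zero_le_one, integral_Ioc_eq_integral_Ioo]
  set B : ℝ → ℝ := fun s => s ^ ((σ + 1) / 2 - 1) * (1 - s) ^ (α - 1)
  -- substitute `s = t ^ 2`
  have hsq :
      EqOn (fun t : ℝ => (2 * t ^ ((2 : ℝ) - 1)) • (Ioo 0 1).indicator B (t ^ (2 : ℝ)))
      ((Ioo 0 1).indicator fun t => 2 * descentWeight (α - 1) σ t) (Ioi 0) := by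
    intro t ht
    have ht₀ : (0 : ℝ) < t := ht
    simp only [rpow_two, show (2 : ℝ) - 1 = 1 by norm_num, rpow_one, smul_eq_mul]
    by_cases ht₁ : t < 1
    · have ht₂ : t ^ 2 ∈ Ioo (0 : ℝ) 1 := ⟨by positivity, by nlinarith⟩
      rw [indicator_of_mem ht₂,
        indicator_of_mem (show t ∈ Ioo (0 : ℝ) 1 from ⟨ht₀, ht₁⟩)]
      have hpow : (t ^ 2) ^ ((σ + 1) / 2 - 1) = t ^ (σ - 1) := by
        rw [← rpow_natCast, ← rpow_mul ht₀.le]; norm_num; ring_nf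
      simp only [B, descentWeight, hpow, rpow_sub_one ht₀.ne']
      field_simp
    · rw [indicator_of_notMem (fun h => ht₁ (by nlinarith [h.2])),
        indicator_of_notMem (fun h => ht₁ h.2), mul_zero]
  have hsub := integral_comp_rpow_Ioi_of_pos (g := (Ioo 0 1).indicator B) two_pos
  rw [setIntegral_congr_fun measurableSet_Ioi hsq, hIoo, hIoo,
    intervalIntegral.integral_const_mul, integral_rpow_mul_one_sub_rpow (by linarith) hα] at hsub
  have hΓ := Gamma_pos_of_pos (show 0 < (σ + 1) / 2 + α by linarith)
  rw [eq_div_iff hΓ.ne'] at hsub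
  rw [eq_div_iff (by positivity)]
  linarith

lemma descentOp1_const_one {ν μ x : ℝ} (hν : -1 < ν) (hνμ : ν < μ) (hx : 0 < x) :
    descentOp1 ν μ (fun _ => 1) x = 1 := by
  have hΓ₁ := Gamma_pos_of_pos (show 0 < (μ + 1) / 2 by linarith)
  have hΓ₂ := Gamma_pos_of_pos (show 0 < (μ - ν) / 2 by linarith)
  have hΓ₃ := Gamma_pos_of_pos (show 0 < (ν + 1) / 2 by linarith)
  simp only [descentOp1_eq_integral_unitInterval ν μ _ hx, one_mul]
  rw [integral_descentWeight (by linarith) hν, descentConst,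
    show (ν + 1) / 2 + (μ - ν) / 2 = (μ + 1) / 2 by ring]
  field_simp

lemma besselOp_eq_of_hasDerivAt {ν y : ℝ} {f f' f'' : ℝ → ℝ}
    (hd : ∀ y, 0 < y → HasDerivAt f (f' y) y) (hd' : ∀ y, 0 < y → HasDerivAt f' (f'' y) y)
    (hy : 0 < y) : besselOp ν f y = f'' y + ν / y * f' y := by
  have hderiv : deriv f =ᶠ[𝓝 y] f' := by
    filter_upwards [Ioi_mem_nhds hy] with z hz using (hd z hz).deriv
  rw [besselOp, hderiv.deriv_eq, (hd' y hy).deriv, (hd y hy).deriv]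

lemma ContDiffOn.hasDerivAt_derivWithin_Ici {f : ℝ → ℝ} {n : WithTop ℕ∞} {a y : ℝ}
    (hf : ContDiffOn ℝ n f (Ici a)) (hn : n ≠ 0) (hy : a < y) :
    HasDerivAt f (derivWithin f (Ici a) y) y := by
  rw [derivWithin_of_mem_nhds (Ici_mem_nhds hy)]
  exact ((hf.differentiableOn hn).differentiableAt (Ici_mem_nhds hy)).hasDerivAt

lemma eq_zero_of_tendsto_rpow_mul {ν : ℝ} {g : ℝ → ℝ} (hν : ν ≤ 0)
    (hg : ContinuousWithinAt g (Ici 0) 0)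
    (hlim : Tendsto (fun y => y ^ ν * g y) (𝓝[>] 0) (𝓝 0)) :
    g 0 = 0 := by
  have hpow : Tendsto (fun y : ℝ => y ^ (-ν)) (𝓝[>] 0) (𝓝 (0 ^ (-ν))) :=
    (continuousAt_rpow_const 0 (-ν) (Or.inr (by linarith))).tendsto.mono_left nhdsWithin_le_nhds
  have h := hpow.mul hlim
  rw [mul_zero] at h
  refine tendsto_nhds_unique (hg.mono Ioi_subset_Ici_self) (h.congr' ?_)
  filter_upwards [self_mem_nhdsWithin] with y hy
  rw [← mul_assoc, ← rpow_add hy, neg_add_cancel, rpow_zero, one_mul]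

lemma abs_le_mul_of_hasDerivAt_of_eq_zero {g g' : ℝ → ℝ} {M y : ℝ} (hy : 0 < y)
    (hg : ContinuousOn g (Icc 0 y)) (hg₀ : g 0 = 0)
    (hd : ∀ z ∈ Ioo 0 y, HasDerivAt g (g' z) z)
    (hM : ∀ z ∈ Ioo 0 y, |g' z| ≤ M) : |g y| ≤ M * y := by
  obtain ⟨c, hc, hslope⟩ := exists_hasDerivAt_eq_slope g g' hy hg hd
  rw [hg₀, sub_zero, sub_zero, eq_div_iff hy.ne'] at hslope
  rw [← hslope, abs_mul, abs_of_pos hy]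
  exact mul_le_mul_of_nonneg_right (hM c hc) hy.le

section Transmutation

variable {ν μ x : ℝ} {f f' f'' : ℝ → ℝ}

lemma intervalIntegrable_div_mul_descentWeight {p : ℝ} (hp : -1 < p) (hν : -1 < ν)
    (hf' : ContinuousOn f' (Ici 0)) (hf'' : ContinuousOn f'' (Ici 0))
    (hd' : ∀ y, 0 < y → HasDerivAt f' (f'' y) y)
    (hlim : Tendsto (fun y => y ^ ν * f' y) (𝓝[>] 0) (𝓝 0)) (hx : 0 < x) :
    IntervalIntegrable (fun t => ν / (t * x) * f' (t * x) * descentWeight p ν t) volume 0 1 := by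
  rcases lt_or_ge 0 ν with hν₀ | hν₀
  · have hw := intervalIntegrable_descentWeight hp (by linarith : -1 < ν - 1)
    refine ((hw.comp_mul_right_mul hf' hx.le).const_mul (ν / x)).congr_uIoo fun t ht => ?_
    rw [uIoo_of_le zero_le_one] at ht
    simp only [descentWeight, rpow_sub_one ht.1.ne']
    field_simp
  -- for `ν ≤ 0` the factor `1 / t` is absorbed by `f' (t * x) = O(t)`
  have hf'₀ := eq_zero_of_tendsto_rpow_mul hν₀ (hf' 0 self_mem_Ici) hlim
  obtain ⟨M, hM⟩ := isCompact_Icc.exists_bound_of_continuousOn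
    (hf''.mono (Icc_subset_Ici_self : Icc 0 x ⊆ Ici 0))
  have hbound : ∀ t ∈ Ι (0 : ℝ) 1, ‖ν / (t * x) * f' (t * x)‖ ≤ |ν| * M := by
    intro t ht
    rw [uIoc_of_le zero_le_one] at ht
    have hy : 0 < t * x := mul_pos ht.1 hx
    have hyx : t * x ≤ x := by nlinarith [ht.2]
    have hlin := abs_le_mul_of_hasDerivAt_of_eq_zero hy (hf'.mono Icc_subset_Ici_self) hf'₀
      (fun z hz => hd' z hz.1) fun z hz => by
        simpa using hM z ⟨hz.1.le, hz.2.le.trans hyx⟩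
    rw [Real.norm_eq_abs, abs_mul, abs_div, abs_of_pos hy, div_mul_eq_mul_div, div_le_iff₀ hy,
      mul_assoc]
    exact mul_le_mul_of_nonneg_left hlin (abs_nonneg ν)
  have hmeas : AEStronglyMeasurable (fun t => ν / (t * x) * f' (t * x))
      (volume.restrict (Ι (0 : ℝ) 1)) := by
    refine ContinuousOn.aestronglyMeasurable ?_ measurableSet_uIoc
    refine (continuousOn_const.div (by fun_prop) fun t ht => ?_).mul
      ((continuousOn_comp_mul_right hf' hx.le).mono uIoc_subset_uIcc)
    rw [uIoc_of_le zero_le_one] at ht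
    exact (mul_pos ht.1 hx).ne'
  exact intervalIntegrable_iff.2 <| (intervalIntegrable_descentWeight hp hν).def'.bdd_mul hmeas
    ((ae_restrict_iff' measurableSet_uIoc).2 (ae_of_all _ hbound))

lemma hasDerivAt_comp_mul_right_mul_descentWeight (hd' : ∀ y, 0 < y → HasDerivAt f' (f'' y) y)
    (hx : 0 < x) {t : ℝ} (ht₀ : 0 < t) (ht₁ : t < 1) :
    HasDerivAt (fun t => f' (t * x) * descentWeight ((μ - ν) / 2) ν t / x)
      ((f'' (t * x) + ν / (t * x) * f' (t * x)) * descentWeight ((μ - ν) / 2 - 1) ν t -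
        (f'' (t * x) * (t * (t * descentWeight ((μ - ν) / 2 - 1) ν t)) +
          μ / x * (f' (t * x) * (t * descentWeight ((μ - ν) / 2 - 1) ν t)))) t := by
  have h := (((hd' (t * x) (mul_pos ht₀ hx)).comp t (hasDerivAt_mul_const x)).mul
    (hasDerivAt_descentWeight (p := (μ - ν) / 2) (σ := ν) ht₀ ht₁)).div_const x
  refine h.congr_deriv ?_
  rw [descentWeight_eq_one_sub_sq_mul (p := (μ - ν) / 2) (by nlinarith), Function.comp_apply]
  field_simp
  ring

lemma tendsto_comp_mul_right_mul_descentWeight_zero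
    (hlim : Tendsto (fun y => y ^ ν * f' y) (𝓝[>] 0) (𝓝 0)) (hx : 0 < x) :
    Tendsto (fun t => f' (t * x) * descentWeight ((μ - ν) / 2) ν t / x) (𝓝[>] 0)
      (𝓝 0) := by
  have hscale : Tendsto (fun t => t * x) (𝓝[>] 0) (𝓝[>] 0) := by
    refine tendsto_nhdsWithin_of_tendsto_nhds_of_eventually_within _ ?_ ?_
    · simpa using ((continuous_mul_const x).tendsto 0).mono_left nhdsWithin_le_nhds
    · filter_upwards [self_mem_nhdsWithin] with t ht using mul_pos ht hx
  have hc : ContinuousAt (fun t : ℝ => (1 - t ^ 2) ^ ((μ - ν) / 2) * x ^ (-ν) / x) 0 :=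
    ((ContinuousAt.rpow_const (by fun_prop) (Or.inl (by norm_num))).mul_const _).div_const _
  have h := (hlim.comp hscale).mul (hc.tendsto.mono_left nhdsWithin_le_nhds)
  rw [zero_mul] at h
  refine h.congr' ?_
  filter_upwards [self_mem_nhdsWithin] with t ht
  have hxν : x ^ ν * x ^ (-ν) = 1 := by rw [← rpow_add hx, add_neg_cancel, rpow_zero]
  simp only [Function.comp_apply, descentWeight, mul_rpow (le_of_lt ht) hx.le]
  linear_combination (t ^ ν * f' (t * x) * (1 - t ^ 2) ^ ((μ - ν) / 2) / x) * hxν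

lemma tendsto_comp_mul_right_mul_descentWeight_one (hνμ : ν < μ) (hf' : ContinuousOn f' (Ici 0))
    (hx : 0 < x) :
    Tendsto (fun t => f' (t * x) * descentWeight ((μ - ν) / 2) ν t / x) (𝓝[<] 1)
      (𝓝 0) := by
  have hf'x : ContinuousAt (fun t => f' (t * x)) 1 :=
    ContinuousAt.comp (by rw [one_mul]; exact (hf' x hx.le).continuousAt (Ici_mem_nhds hx))
      (continuous_mul_const x).continuousAt
  have hw : ContinuousAt (descentWeight ((μ - ν) / 2) ν) 1 :=
    (ContinuousAt.rpow_const (by fun_prop) (Or.inr (by linarith))).mul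
      (continuousAt_rpow_const 1 ν (Or.inl one_ne_zero))
  have h := ((hf'x.mul hw).div_const x).tendsto.mono_left (nhdsWithin_le_nhds (s := Iio 1))
  rwa [Pi.mul_apply, descentWeight, one_pow, sub_self, zero_rpow (by linarith), zero_mul,
    mul_zero, zero_div] at h

lemma integral_bessel_mul_descentWeight (hν : -1 < ν) (hνμ : ν < μ)
    (hf' : ContinuousOn f' (Ici 0)) (hf'' : ContinuousOn f'' (Ici 0))
    (hd' : ∀ y, 0 < y → HasDerivAt f' (f'' y) y)
    (hlim : Tendsto (fun y => y ^ ν * f' y) (𝓝[>] 0) (𝓝 0)) (hx : 0 < x) :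
    ∫ t in (0 : ℝ)..1, (f'' (t * x) + ν / (t * x) * f' (t * x)) *
        descentWeight ((μ - ν) / 2 - 1) ν t =
      (∫ t in (0 : ℝ)..1, f'' (t * x) * (t * (t * descentWeight ((μ - ν) / 2 - 1) ν t))) +
        μ / x *
          ∫ t in (0 : ℝ)..1, f' (t * x) * (t * descentWeight ((μ - ν) / 2 - 1) ν t) := by
  have hw := intervalIntegrable_descentWeight (by linarith : -1 < (μ - ν) / 2 - 1) hν
  have hbessel : IntervalIntegrable (fun t => (f'' (t * x) + ν / (t * x) * f' (t * x)) *
      descentWeight ((μ - ν) / 2 - 1) ν t) volume 0 1 := by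
    simpa only [add_mul] using (hw.comp_mul_right_mul hf'' hx.le).add
      (intervalIntegrable_div_mul_descentWeight (by linarith) hν hf' hf'' hd' hlim hx)
  have hsecond := hw.id_mul.id_mul.comp_mul_right_mul hf'' hx.le
  have hfirst := (hw.id_mul.comp_mul_right_mul hf' hx.le).const_mul (μ / x)
  have hFTC := intervalIntegral.integral_eq_sub_of_hasDerivAt_of_tendsto zero_lt_one
    (fun t ht => hasDerivAt_comp_mul_right_mul_descentWeight hd' hx ht.1 ht.2)
    (hbessel.sub (hsecond.add hfirst)) (tendsto_comp_mul_right_mul_descentWeight_zero hlim hx)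
    (tendsto_comp_mul_right_mul_descentWeight_one hνμ hf' hx)
  rw [intervalIntegral.integral_sub hbessel (hsecond.add hfirst),
    intervalIntegral.integral_add hsecond hfirst, intervalIntegral.integral_const_mul] at hFTC
  linarith

lemma hasDerivAt_descentOp1 (hν : -1 < ν) (hνμ : ν < μ) (hf : ContinuousOn f (Ici 0))
    (hf' : ContinuousOn f' (Ici 0)) (hd : ∀ y, 0 < y → HasDerivAt f (f' y) y) (hx : 0 < x) :
    HasDerivAt (descentOp1 ν μ f)
      (descentConst ν μ *
        ∫ t in (0 : ℝ)..1, f' (t * x) * (t * descentWeight ((μ - ν) / 2 - 1) ν t)) x := by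
  refine ((hasDerivAt_integral_comp_mul_right_mul
    (intervalIntegrable_descentWeight (by linarith) hν) hf hf' hd hx).const_mul
      (descentConst ν μ)).congr_of_eventuallyEq ?_
  filter_upwards [Ioi_mem_nhds hx] with z hz using descentOp1_eq_integral_unitInterval ν μ f hz

lemma besselOp_descentOp1_eq (hν : -1 < ν) (hνμ : ν < μ) (hf : ContinuousOn f (Ici 0))
    (hf' : ContinuousOn f' (Ici 0)) (hf'' : ContinuousOn f'' (Ici 0))
    (hd : ∀ y, 0 < y → HasDerivAt f (f' y) y) (hd' : ∀ y, 0 < y → HasDerivAt f' (f'' y) y)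
    (hx : 0 < x) :
    besselOp μ (descentOp1 ν μ f) x = descentConst ν μ *
      ((∫ t in (0 : ℝ)..1, f'' (t * x) * (t * (t * descentWeight ((μ - ν) / 2 - 1) ν t))) +
        μ / x *
          ∫ t in (0 : ℝ)..1, f' (t * x) * (t * descentWeight ((μ - ν) / 2 - 1) ν t)) := by
  have hw := intervalIntegrable_descentWeight (by linarith : -1 < (μ - ν) / 2 - 1) hν
  rw [besselOp_eq_of_hasDerivAt (fun y hy => hasDerivAt_descentOp1 hν hνμ hf hf' hd hy)
    (fun y hy => (hasDerivAt_integral_comp_mul_right_mul hw.id_mul hf' hf'' hd' hy).const_mul _)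
    hx]
  ring

theorem descentOp1_besselOp_eq_besselOp_descentOp1 (hν : -1 < ν) (hνμ : ν < μ)
    (hf : ContinuousOn f (Ici 0)) (hf' : ContinuousOn f' (Ici 0)) (hf'' : ContinuousOn f'' (Ici 0))
    (hd : ∀ y, 0 < y → HasDerivAt f (f' y) y) (hd' : ∀ y, 0 < y → HasDerivAt f' (f'' y) y)
    (hlim : Tendsto (fun y => y ^ ν * f' y) (𝓝[>] 0) (𝓝 0)) (hx : 0 < x) :
    descentOp1 ν μ (besselOp ν f) x = besselOp μ (descentOp1 ν μ f) x := by
  rw [besselOp_descentOp1_eq hν hνμ hf hf' hf'' hd hd' hx,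
    descentOp1_eq_integral_unitInterval _ _ _ hx,
    ← integral_bessel_mul_descentWeight hν hνμ hf' hf'' hd' hlim hx]
  congr 1
  refine intervalIntegral.integral_congr_Ioo_of_le zero_le_one fun t ht => ?_
  rw [besselOp_eq_of_hasDerivAt hd hd' (mul_pos ht.1 hx)]

end Transmutation

/-- the first descent operator intertwines the Bessel operators,
`T B_ν = B_μ T`, and `T 1 = 1`. -/
theorem descent1_transmutation (ν μ : ℝ) (hν : -1 < ν) (hνμ : ν < μ) (f : ℝ → ℝ)
    (hf : ContDiffOn ℝ 2 f (Set.Ici (0 : ℝ)))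
    (hf'0 : Tendsto (fun y => y ^ ν * deriv f y) (nhdsWithin 0 (Set.Ioi (0 : ℝ))) (nhds 0)) :
    ∀ x : ℝ, 0 < x →
      descentOp1 ν μ (besselOp ν f) x = besselOp μ (descentOp1 ν μ f) x ∧
      descentOp1 ν μ (fun _ => 1) x = 1 := by
  intro x hx
  have hf₁ : ContDiffOn ℝ 1 (derivWithin f (Ici 0)) (Ici 0) :=
    hf.derivWithin (uniqueDiffOn_Ici 0) (by norm_num)
  have hd := fun y (hy : 0 < y) => hf.hasDerivAt_derivWithin_Ici (by norm_num) hy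
  have hd' := fun y (hy : 0 < y) => hf₁.hasDerivAt_derivWithin_Ici (by norm_num) hy
  have hlim : Tendsto (fun y => y ^ ν * derivWithin f (Ici 0) y) (𝓝[>] 0) (𝓝 0) := by
    refine hf'0.congr' ?_
    filter_upwards [self_mem_nhdsWithin] with y hy
    rw [(hd y hy).deriv]
  exact ⟨descentOp1_besselOp_eq_besselOp_descentOp1 hν hνμ hf.continuousOn hf₁.continuousOn
      (hf₁.continuousOn_derivWithin (uniqueDiffOn_Ici 0) le_rfl) hd hd' hlim hx,
    descentOp1_const_one hν hνμ hx⟩
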